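/- For every q ∈ Homeo⁺([0,1]), the set of those f ∈ Homeo⁺([0,1]) for which the set {x ∈ (0,1) : f(x) = q(x)} is infinite is neither Haar null nor co-Haar null. -/

import Mathlib

open MeasureTheory unitInterval Set

noncomputable section

/-- A subset of a group with a measurable structure is *Haar null* (Christensen) if it is
contained in a Borel (here: measurable) set `B` admitting a Borel probability measure `μ`
all of whose two-sided translates `g • B • h` are `μ`-null. -/
def IsHaarNull {G : Type*} [Group G] [MeasurableSpace G] (A : Set G) : Prop :=
  ∃ B : Set G, A ⊆ B ∧ MeasurableSet B ∧
    ∃ μ : Measure G, IsProbabilityMeasure μ ∧ ∀ g h : G, μ ((fun b => g * b * h) '' B) = 0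

/-- The group of self-homeomorphisms of a space, with `(f * g) x = f (g x)`. -/
instance Homeomorph.instGroupSelf {X : Type*} [TopologicalSpace X] : Group (X ≃ₜ X) where
  mul f g := g.trans f
  one := Homeomorph.refl X
  inv := Homeomorph.symm
  mul_assoc _ _ _ := Homeomorph.ext fun _ => rfl
  one_mul _ := Homeomorph.ext fun _ => rfl
  mul_one _ := Homeomorph.ext fun _ => rfl
  inv_mul_cancel f := Homeomorph.ext fun x => f.symm_apply_apply x

/-- The topology of uniform convergence (= compact-open topology, as the underlying space is
compact) on the self-homeomorphism group. -/
instance Homeomorph.instTopologicalSpaceSelf {X : Type*} [TopologicalSpace X] :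
    TopologicalSpace (X ≃ₜ X) :=
  TopologicalSpace.induced (fun f => (⟨⇑f, f.continuous⟩ : C(X, X))) inferInstance

/-- The Polish group `Homeo⁺([0,1])` of increasing homeomorphisms of `[0,1]`. -/
def HomeoPlusI : Subgroup (I ≃ₜ I) where
  carrier := {f | Monotone ⇑f}
  one_mem' := fun _ _ h => h
  mul_mem' := fun hf hg => hf.comp hg
  inv_mem' := by
    intro f hf a b hab
    show f.symm a ≤ f.symm b
    by_contra hcon
    push_neg at hcon
    have h1 : f (f.symm b) ≤ f (f.symm a) := hf hcon.le
    rw [f.apply_symm_apply, f.apply_symm_apply] at h1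
    have : a = b := le_antisymm hab h1
    subst this
    exact lt_irrefl _ hcon

instance : MeasurableSpace HomeoPlusI := borel _
instance : BorelSpace HomeoPlusI := ⟨rfl⟩

/-- The set of fixed points of `f ∈ Homeo⁺([0,1])`. -/
def fixSet (f : HomeoPlusI) : Set I := {x | (f : I ≃ₜ I) x = x}

/-!
Given a Borel probability measure `μ`, it suffices to put one left translate `(q * ψ⁻¹) • E` of a
set `E` of positive measure inside the set (resp. inside its complement); since
`(q ψ⁻¹ u) x = q x ↔ u x = ψ x`, this removes `q`.

At a fixed point `x ∈ (0, 1)` the random value `u x` stays away from `0` and `1` with high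
probability, while for a fixed level `y > 0` we have `u x < y` with high probability once `x` is
small. Choosing points `(xₙ, yₙ) → (0, 0)` recursively, with error probabilities summing to less
than `1`, we get a set of positive measure on which `u` passes alternately above and below these
points; a piecewise linear `ψ` through them then crosses every such `u` infinitely often. In the
same way, points accumulating at `(0, 0)` and at `(1, 1)` that `u` stays below with positive
probability give a piecewise linear `φ` with `u < φ` on `(0, 1)`.
-/
open Filter Topology
open scoped ENNReal

lemma not_isHaarNull_of_forall_exists_measure_pos {G : Type*} [Group G] [MeasurableSpace G]
    {A : Set G} (h : ∀ μ : Measure G, IsProbabilityMeasure μ → ∃ g : G, 0 < μ {u | g * u ∈ A}) :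
    ¬ IsHaarNull A := by
  rintro ⟨B, hAB, -, μ, hμ, hB⟩
  obtain ⟨g, hg⟩ := h μ hμ
  refine hg.ne' (measure_mono_null (fun u hu => ?_) (hB g⁻¹ 1))
  exact ⟨g * u, hAB hu, by group⟩

section Measure

variable {α : Type*} [MeasurableSpace α] {μ : Measure α}

lemma measure_iInter_compl_pos {ι : Type*} [Countable ι] [IsProbabilityMeasure μ]
    {s : ι → Set α} (h : ∑' i, μ (s i) < 1) : 0 < μ (⋂ i, (s i)ᶜ) := by
  rw [← compl_iUnion, pos_iff_ne_zero]
  intro h0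
  have : μ univ < 1 := calc
    μ univ ≤ μ (⋃ i, s i) + μ (⋃ i, s i)ᶜ := measure_univ_le_add_compl _
    _ = μ (⋃ i, s i) := by rw [h0, add_zero]
    _ ≤ ∑' i, μ (s i) := measure_iUnion_le s
    _ < 1 := h
  exact this.ne measure_univ

lemma eventually_measure_lt_of_biInter_eq_empty [IsFiniteMeasure μ] {s : ℝ → Set α} {a : ℝ}
    (hs : ∀ r, MeasurableSet (s r)) (hmono : Monotone s) (hempty : ⋂ r > a, s r = ∅)
    {η : ℝ≥0∞} (hη : 0 < η) : ∀ᶠ r in 𝓝[>] a, μ (s r) < η := by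
  have := tendsto_measure_biInter_gt (μ := μ) (fun r _ => (hs r).nullMeasurableSet)
    (fun _ _ _ hij => hmono hij) ⟨a + 1, lt_add_one a, measure_ne_top μ _⟩
  rw [hempty, measure_empty] at this
  exact this.eventually (gt_mem_nhds hη)

end Measure

lemma tsum_two_inv_pow_add_two_lt_one : ∑' n : ℕ, (2⁻¹ : ℝ≥0∞) ^ (n + 2) < 1 := by
  simp_rw [pow_add, ENNReal.tsum_mul_right, ENNReal.tsum_geometric, ENNReal.one_sub_inv_two,
    inv_inv]
  rw [mul_comm, pow_two, mul_assoc, ENNReal.inv_mul_cancel two_ne_zero ENNReal.ofNat_ne_top,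
    mul_one]
  exact ENNReal.inv_lt_one.2 ENNReal.one_lt_two

lemma exists_seq_of_forall_exists {α : Type*} {p : α → Prop} {r : ℕ → α → α → Prop} {a : α}
    (ha : p a) (h : ∀ n x, p x → ∃ y, p y ∧ r n x y) :
    ∃ f : ℕ → α, f 0 = a ∧ ∀ n, p (f n) ∧ r n (f n) (f (n + 1)) := by
  choose! g hg using h
  let f : ℕ → α := fun n => Nat.rec a g n
  have hf : ∀ n, p (f n) := fun n => Nat.rec ha (fun n ih => (hg n _ ih).1) n
  exact ⟨f, rfl, fun n => ⟨hf n, (hg n _ (hf n)).2⟩⟩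

lemma exists_seq_strictAnti_of_eventually {P : ℕ → ℝ → Prop}
    (h : ∀ n, ∀ᶠ x in 𝓝[>] 0, P n x) :
    ∃ x : ℕ → ℝ, StrictAnti x ∧ Tendsto x atTop (𝓝[>] 0) ∧ ∀ n, P n (x n) := by
  have hpow : Tendsto (fun k : ℕ => (2⁻¹ : ℝ) ^ k) atTop (𝓝[>] 0) :=
    tendsto_pow_atTop_nhdsWithin_zero_of_lt_one (by norm_num) (by norm_num)
  obtain ⟨φ, hφ, hP⟩ := extraction_forall_of_eventually fun n => hpow.eventually (h n)
  exact ⟨_, (pow_right_strictAnti₀ (by norm_num) (by norm_num)).comp_strictMono hφ,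
    hpow.comp hφ.tendsto_atTop, hP⟩

lemma strictAnti_tendsto_of_le_half {x : ℕ → ℝ} (hpos : ∀ n, 0 < x n)
    (hx : ∀ n, x (n + 1) ≤ x n / 2) : StrictAnti x ∧ Tendsto x atTop (𝓝[>] 0) := by
  refine ⟨strictAnti_nat_of_succ_lt fun n => (hx n).trans_lt (half_lt_self (hpos n)), ?_⟩
  have hle : ∀ n, x n ≤ x 0 * 2⁻¹ ^ n := fun n => by
    induction n with
    | zero => simp
    | succ n ih => rw [pow_succ]; linarith [hx n]
  refine tendsto_nhdsWithin_iff.2 ⟨squeeze_zero (fun n => (hpos n).le) hle ?_,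
    Eventually.of_forall hpos⟩
  simpa using (tendsto_pow_atTop_nhds_zero_of_lt_one (r := (2⁻¹ : ℝ)) (by norm_num)
    (by norm_num)).const_mul (x 0)

lemma strictAnti_two_inv_pow_add_two :
    StrictAnti fun n : ℕ => (2⁻¹ : ℝ) ^ (n + 2) :=
  (pow_right_strictAnti₀ (by norm_num) (by norm_num)).comp_strictMono fun _ _ h => by omega

lemma tendsto_two_inv_pow_add_two :
    Tendsto (fun n : ℕ => (2⁻¹ : ℝ) ^ (n + 2)) atTop (𝓝[>] 0) :=
  (tendsto_pow_atTop_nhdsWithin_zero_of_lt_one (by norm_num) (by norm_num)).comp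
    (tendsto_add_atTop_nat 2)

lemma StrictAnti.pos_of_tendsto_nhdsGT {a : ℕ → ℝ} (ha : StrictAnti a)
    (h : Tendsto a atTop (𝓝[>] 0)) (n : ℕ) : 0 < a n :=
  (ha.antitone.le_of_tendsto (h.mono_right nhdsWithin_le_nhds) (n + 1)).trans_lt
    (ha (lt_add_one n))

lemma strictMono_of_strictMonoOn_Ioo {f : ℝ → ℝ} (hf : StrictMonoOn f (Ioo 0 1))
    (hmaps : MapsTo f (Ioo 0 1) (Ioo 0 1)) (hid : ∀ t ∉ Ioo (0 : ℝ) 1, f t = t) :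
    StrictMono f := by
  intro s t hst
  by_cases hs : s ∈ Ioo (0 : ℝ) 1 <;> by_cases ht : t ∈ Ioo (0 : ℝ) 1
  · exact hf hs ht hst
  · have : 1 ≤ t := by by_contra h; exact ht ⟨hs.1.trans hst, not_le.1 h⟩
    rw [hid t ht]; exact (hmaps hs).2.trans_le this
  · have : s ≤ 0 := by by_contra h; exact hs ⟨not_le.1 h, hst.trans ht.2⟩
    rw [hid s hs]; exact this.trans_lt (hmaps ht).1
  · rwa [hid s hs, hid t ht]

namespace HomeoPlusI

variable (u : HomeoPlusI)

lemma strictMono : StrictMono (u : I ≃ₜ I) :=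
  u.2.strictMono_of_injective (u : I ≃ₜ I).injective

lemma apply_zero : (u : I ≃ₜ I) 0 = 0 :=
  le_antisymm ((u.2 unitInterval.nonneg').trans_eq ((u : I ≃ₜ I).apply_symm_apply 0))
    unitInterval.nonneg'

lemma apply_one : (u : I ≃ₜ I) 1 = 1 :=
  le_antisymm unitInterval.le_one'
    (((u : I ≃ₜ I).apply_symm_apply 1).symm.trans_le (u.2 unitInterval.le_one'))

def extend : ℝ → ℝ := IccExtend zero_le_one fun t => ((u : I ≃ₜ I) t : ℝ)

lemma extend_coe (x : I) : extend u x = (u : I ≃ₜ I) x := IccExtend_val _ _ x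

lemma extend_of_mem {x : ℝ} (hx : x ∈ Icc 0 1) : extend u x = (u : I ≃ₜ I) ⟨x, hx⟩ :=
  IccExtend_of_mem _ _ hx

lemma continuous_extend : Continuous (extend u) :=
  (continuous_subtype_val.comp (u : I ≃ₜ I).continuous).Icc_extend'

lemma monotone_extend : Monotone (extend u) :=
  Monotone.IccExtend _ fun _ _ h => u.2 h

lemma strictMonoOn_extend : StrictMonoOn (extend u) (Icc 0 1) := by
  intro x hx y hy hxy
  rw [extend_of_mem u hx, extend_of_mem u hy]
  exact strictMono u hxy

lemma extend_zero : extend u 0 = 0 := by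
  simpa using (extend_coe u 0).trans (congrArg Subtype.val (apply_zero u))

lemma extend_one : extend u 1 = 1 := by
  simpa using (extend_coe u 1).trans (congrArg Subtype.val (apply_one u))

lemma extend_pos {x : ℝ} (hx : 0 < x) : 0 < extend u x :=
  calc 0 = extend u 0 := (extend_zero u).symm
    _ < extend u (min x 1) := strictMonoOn_extend u ⟨le_rfl, zero_le_one⟩
        ⟨(lt_min hx one_pos).le, min_le_right _ _⟩ (lt_min hx one_pos)
    _ ≤ extend u x := monotone_extend u (min_le_left _ _)

lemma extend_lt_one {x : ℝ} (hx : x < 1) : extend u x < 1 :=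
  calc extend u x ≤ extend u (max x 0) := monotone_extend u (le_max_left _ _)
    _ < extend u 1 := strictMonoOn_extend u ⟨le_max_right _ _, (max_lt hx one_pos).le⟩
        ⟨zero_le_one, le_rfl⟩ (max_lt hx one_pos)
    _ = 1 := extend_one u

lemma continuous_extend_apply (x : ℝ) : Continuous fun u : HomeoPlusI => extend u x := by
  have hC : Continuous fun f : I ≃ₜ I => (⟨f, f.continuous⟩ : C(I, I)) := continuous_induced_dom
  exact continuous_subtype_val.comp
    (((continuous_eval_const (projIcc 0 1 zero_le_one x)).comp hC).comp continuous_subtype_val)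

def ofOrderIso (e : ℝ ≃o ℝ) (h₀ : e 0 = 0) (h₁ : e 1 = 1) : HomeoPlusI :=
  let e' : I ≃o I :=
    { toEquiv := e.toEquiv.subtypeEquiv fun x => by
        rw [mem_Icc, mem_Icc, ← e.le_iff_le (x := 0), ← e.le_iff_le (x := x) (y := 1), h₀, h₁]
        rfl
      map_rel_iff' := e.le_iff_le }
  ⟨e'.toHomeomorph, e'.monotone⟩

lemma extend_ofOrderIso (e : ℝ ≃o ℝ) (h₀ : e 0 = 0) (h₁ : e 1 = 1) {x : ℝ} (hx : x ∈ Icc 0 1) :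
    extend (ofOrderIso e h₀ h₁) x = e x :=
  extend_of_mem _ hx

end HomeoPlusI

def crossingSet (f g : HomeoPlusI) : Set I :=
  {x | (x : ℝ) ∈ Ioo 0 1 ∧ (f : I ≃ₜ I) x = (g : I ≃ₜ I) x}

lemma crossingSet_mul_inv_mul (q ψ u : HomeoPlusI) :
    crossingSet (q * ψ⁻¹ * u) q = crossingSet u ψ := by
  ext x
  change _ ∧ (q : I ≃ₜ I) ((ψ : I ≃ₜ I).symm ((u : I ≃ₜ I) x)) = (q : I ≃ₜ I) x ↔ _
  rw [(q : I ≃ₜ I).injective.eq_iff, Homeomorph.symm_apply_eq]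
  rfl

structure Scale where
  toFun : ℤ → ℝ
  strictMono' : StrictMono toFun
  mem_Ioo' : ∀ k, toFun k ∈ Ioo (0 : ℝ) 1
  exists_lt' : ∀ ε > 0, ∃ k, toFun k < ε
  exists_gt' : ∀ t < 1, ∃ k, t < toFun k

namespace Scale

instance : CoeFun Scale fun _ => ℤ → ℝ := ⟨toFun⟩

variable (X Y : Scale) {k : ℤ} {t : ℝ}

lemma strictMono : StrictMono X := X.strictMono'

lemma mem_Ioo (k : ℤ) : X k ∈ Ioo (0 : ℝ) 1 := X.mem_Ioo' k

lemma mem_Icc (k : ℤ) : X k ∈ Icc (0 : ℝ) 1 := Ioo_subset_Icc_self (X.mem_Ioo k)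

lemma succ_sub_pos (k : ℤ) : 0 < X (k + 1) - X k := sub_pos.2 (X.strictMono (lt_add_one k))

def idx (t : ℝ) : ℤ := sSup {k | X k ≤ t}

lemma idx_eq (h₁ : X k ≤ t) (h₂ : t < X (k + 1)) : X.idx t = k :=
  IsGreatest.csSup_eq
    ⟨h₁, fun _ hj => Int.lt_add_one_iff.1 (X.strictMono.lt_iff_lt.1 (hj.trans_lt h₂))⟩

lemma exists_bracket (ht : t ∈ Ioo 0 1) : ∃ k, X k ≤ t ∧ t < X (k + 1) := by
  obtain ⟨k₀, hk₀⟩ := X.exists_lt' t ht.1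
  obtain ⟨k₁, hk₁⟩ := X.exists_gt' t ht.2
  obtain ⟨k, hk, hmax⟩ := Int.exists_greatest_of_bdd (P := fun j => X j ≤ t)
    ⟨k₁, fun j hj => (X.strictMono.lt_iff_lt.1 (hj.trans_lt hk₁)).le⟩ ⟨k₀, hk₀.le⟩
  exact ⟨k, hk, lt_of_not_ge fun h => (hmax _ h).not_gt (lt_add_one k)⟩

lemma mem_Ioo_of_bracket (h₁ : X k ≤ t) (h₂ : t < X (k + 1)) : t ∈ Ioo 0 1 :=
  ⟨(X.mem_Ioo k).1.trans_le h₁, h₂.trans (X.mem_Ioo _).2⟩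

def seg (k : ℤ) (t : ℝ) : ℝ := Y k + (t - X k) / (X (k + 1) - X k) * (Y (k + 1) - Y k)

lemma seg_mem (h₁ : X k ≤ t) (h₂ : t < X (k + 1)) : seg X Y k t ∈ Ico (Y k) (Y (k + 1)) := by
  have hr₀ : 0 ≤ (t - X k) / (X (k + 1) - X k) := div_nonneg (by linarith) (X.succ_sub_pos k).le
  have hr₁ : (t - X k) / (X (k + 1) - X k) < 1 := (div_lt_one (X.succ_sub_pos k)).2 (by linarith)
  have hY := Y.succ_sub_pos k
  constructor <;> simp only [seg] <;> nlinarith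

lemma seg_strictMono (k : ℤ) : StrictMono (seg X Y k) := fun s t hst => by
  have := div_lt_div_of_pos_right (sub_lt_sub_right hst (X k)) (X.succ_sub_pos k)
  simp only [seg]
  nlinarith [Y.succ_sub_pos k]

lemma seg_seg (k : ℤ) (t : ℝ) : seg Y X k (seg X Y k t) = t := by
  have := (X.succ_sub_pos k).ne'
  have := (Y.succ_sub_pos k).ne'
  simp only [seg]
  field_simp
  ring

lemma seg_self (k : ℤ) : seg X Y k (X k) = Y k := by simp [seg]

/-- Extended by the identity off `(0, 1)`, the piecewise linear interpolation of `X k ↦ Y k` is a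
strictly monotone bijection of `ℝ`, hence an order isomorphism. -/
def interpFun (t : ℝ) : ℝ := if t ∈ Ioo 0 1 then seg X Y (X.idx t) t else t

lemma interpFun_eq_seg (h₁ : X k ≤ t) (h₂ : t < X (k + 1)) : interpFun X Y t = seg X Y k t := by
  rw [interpFun, if_pos (X.mem_Ioo_of_bracket h₁ h₂), X.idx_eq h₁ h₂]

lemma interpFun_of_notMem (ht : t ∉ Ioo 0 1) : interpFun X Y t = t := if_neg ht

lemma interpFun_apply (k : ℤ) : interpFun X Y (X k) = Y k := by
  rw [interpFun_eq_seg X Y le_rfl (X.strictMono (lt_add_one k)), seg_self]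

lemma interpFun_mem (h₁ : X k ≤ t) (h₂ : t < X (k + 1)) :
    interpFun X Y t ∈ Ico (Y k) (Y (k + 1)) := by
  rw [interpFun_eq_seg X Y h₁ h₂]
  exact seg_mem X Y h₁ h₂

lemma mapsTo_interpFun : MapsTo (interpFun X Y) (Ioo 0 1) (Ioo 0 1) := fun t ht => by
  obtain ⟨k, h₁, h₂⟩ := X.exists_bracket ht
  have h := interpFun_mem X Y h₁ h₂
  exact Y.mem_Ioo_of_bracket h.1 h.2

lemma strictMonoOn_interpFun : StrictMonoOn (interpFun X Y) (Ioo 0 1) := by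
  intro s hs t ht hst
  obtain ⟨k, hk₁, hk₂⟩ := X.exists_bracket hs
  obtain ⟨j, hj₁, hj₂⟩ := X.exists_bracket ht
  have hkj : k ≤ j := Int.lt_add_one_iff.1 (X.strictMono.lt_iff_lt.1 (hk₁.trans_lt (hst.trans hj₂)))
  rcases hkj.eq_or_lt with rfl | hkj
  · rw [interpFun_eq_seg X Y hk₁ hk₂, interpFun_eq_seg X Y hj₁ hj₂]
    exact seg_strictMono X Y k hst
  · calc interpFun X Y s < Y (k + 1) := (interpFun_mem X Y hk₁ hk₂).2
      _ ≤ Y j := Y.strictMono.monotone (Int.add_one_le_iff.2 hkj)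
      _ ≤ interpFun X Y t := (interpFun_mem X Y hj₁ hj₂).1

lemma strictMono_interpFun : StrictMono (interpFun X Y) :=
  strictMono_of_strictMonoOn_Ioo (strictMonoOn_interpFun X Y) (mapsTo_interpFun X Y)
    fun _ => interpFun_of_notMem X Y

lemma interpFun_interpFun (t : ℝ) : interpFun Y X (interpFun X Y t) = t := by
  by_cases ht : t ∈ Ioo 0 1
  · obtain ⟨k, h₁, h₂⟩ := X.exists_bracket ht
    have h := interpFun_mem X Y h₁ h₂
    rw [interpFun_eq_seg Y X h.1 h.2, interpFun_eq_seg X Y h₁ h₂, seg_seg]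
  · rw [interpFun_of_notMem X Y ht, interpFun_of_notMem Y X ht]

def interp : HomeoPlusI :=
  HomeoPlusI.ofOrderIso
    ((strictMono_interpFun X Y).orderIsoOfRightInverse _ _ (interpFun_interpFun Y X))
    (interpFun_of_notMem X Y (by simp)) (interpFun_of_notMem X Y (by simp))

lemma extend_interp (k : ℤ) : HomeoPlusI.extend (interp X Y) (X k) = Y k :=
  (HomeoPlusI.extend_ofOrderIso _ _ _ (X.mem_Icc k)).trans (interpFun_apply X Y k)

/-- The scale `… < a 1 < a 0 < 1 - b 0 < 1 - b 1 < …`, with `a 0` at index `-1`. -/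
def ofEnds (a b : ℕ → ℝ) (ha : StrictAnti a) (hb : StrictAnti b)
    (ha₀ : Tendsto a atTop (𝓝[>] 0)) (hb₀ : Tendsto b atTop (𝓝[>] 0)) (hab : a 0 + b 0 < 1) :
    Scale where
  toFun := Int.rec (fun n => 1 - b n) a
  strictMono' := by
    refine strictMono_int_of_lt_succ ?_
    rintro (n | _ | n)
    · exact sub_lt_sub_left (hb (lt_add_one n)) 1
    · show a 0 < 1 - b 0
      linarith
    · exact ha (lt_add_one n)
  mem_Ioo' := by
    have ha0 := ha.pos_of_tendsto_nhdsGT ha₀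
    have hb0 := hb.pos_of_tendsto_nhdsGT hb₀
    rintro (n | n)
    · exact ⟨by linarith [hb.antitone n.zero_le, ha0 0], by linarith [hb0 n]⟩
    · exact ⟨ha0 n, by linarith [ha.antitone n.zero_le, hb0 0]⟩
  exists_lt' ε hε := by
    obtain ⟨n, hn⟩ := ((ha₀.mono_right nhdsWithin_le_nhds).eventually (gt_mem_nhds hε)).exists
    exact ⟨Int.negSucc n, hn⟩
  exists_gt' t ht := by
    obtain ⟨n, hn⟩ := ((hb₀.mono_right nhdsWithin_le_nhds).eventually
      (gt_mem_nhds (sub_pos.2 ht))).exists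
    exact ⟨n, by show t < 1 - b n; linarith⟩

def shift (X : Scale) : Scale where
  toFun k := X (k + 1)
  strictMono' := X.strictMono.comp fun _ _ h => by omega
  mem_Ioo' k := X.mem_Ioo (k + 1)
  exists_lt' ε hε := by
    obtain ⟨k, hk⟩ := X.exists_lt' ε hε
    exact ⟨k - 1, by simpa using hk⟩
  exists_gt' t ht := by
    obtain ⟨k, hk⟩ := X.exists_gt' t ht
    exact ⟨k - 1, by simpa using hk⟩

end Scale

namespace HomeoPlusI

lemma crossingSet_infinite_of_alternating {u ψ : HomeoPlusI} {x : ℕ → ℝ} (hx : StrictAnti x)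
    (hx₀₁ : ∀ n, x n ∈ Ioo 0 1) (heven : ∀ n, extend ψ (x (2 * n)) ≤ extend u (x (2 * n)))
    (hodd : ∀ n, extend u (x (2 * n + 1)) ≤ extend ψ (x (2 * n + 1))) :
    (crossingSet u ψ).Infinite := by
  have hcross : ∀ n, ∃ c ∈ Icc (x (2 * n + 1)) (x (2 * n)), extend u c = extend ψ c := fun n =>
    isPreconnected_Icc.intermediate_value₂ (left_mem_Icc.2 (hx (lt_add_one _)).le)
      (right_mem_Icc.2 (hx (lt_add_one _)).le) (continuous_extend u).continuousOn
      (continuous_extend ψ).continuousOn (hodd n) (heven n)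
  choose c hc hcu using hcross
  have hc₀₁ (n : ℕ) : c n ∈ Ioo 0 1 := ⟨(hx₀₁ _).1.trans_le (hc n).1, (hc n).2.trans_lt (hx₀₁ _).2⟩
  have hanti : StrictAnti c := strictAnti_nat_of_succ_lt fun n =>
    ((hc (n + 1)).2.trans_lt (hx (by omega))).trans_le (hc n).1
  refine infinite_of_injective_forall_mem (f := fun n => (⟨c n, Ioo_subset_Icc_self (hc₀₁ n)⟩ : I))
    (fun m n h => hanti.injective (congrArg Subtype.val h)) fun n => ⟨hc₀₁ n, Subtype.ext ?_⟩
  rw [← extend_of_mem, ← extend_of_mem]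
  exact hcu n

lemma crossingSet_eq_empty_of_scale {u φ : HomeoPlusI} (P : Scale)
    (h : ∀ k, extend u (P (k + 1)) ≤ extend φ (P k)) : crossingSet u φ = ∅ := by
  refine eq_empty_iff_forall_notMem.2 fun x ⟨hx, hux⟩ => ?_
  obtain ⟨k, h₁, h₂⟩ := P.exists_bracket hx
  have := calc extend u x < extend u (P (k + 1)) := strictMonoOn_extend u x.2 (P.mem_Icc _) h₂
    _ ≤ extend φ (P k) := h k
    _ ≤ extend φ x := monotone_extend φ h₁
  rw [extend_coe, extend_coe, hux] at this
  exact lt_irrefl _ this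

def wrongSide (n : ℕ) (z : ℝ × ℝ) : Set HomeoPlusI :=
  if Even n then {u | extend u z.1 < z.2} else {u | z.2 < extend u z.1}

section

variable (μ : Measure HomeoPlusI) [IsFiniteMeasure μ] {η : ℝ≥0∞}

lemma measurableSet_lt_extend (y x : ℝ) : MeasurableSet {u : HomeoPlusI | y < extend u x} :=
  measurableSet_lt measurable_const (continuous_extend_apply x).measurable

lemma eventually_measure_lt_extend_lt {y : ℝ} (hy : 0 < y) (hη : 0 < η) :
    ∀ᶠ x in 𝓝[>] 0, μ {u | y < extend u x} < η := by
  refine eventually_measure_lt_of_biInter_eq_empty (measurableSet_lt_extend y)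
    (fun x x' hxx' u hu => hu.trans_le (monotone_extend u hxx')) ?_ hη
  refine eq_empty_iff_forall_notMem.2 fun u hu => ?_
  have h0 : extend u 0 < y := (extend_zero u).trans_lt hy
  have hnear : ∀ᶠ x in 𝓝[>] 0, extend u x < y :=
    (((continuous_extend u).tendsto 0).eventually (gt_mem_nhds h0)).filter_mono nhdsWithin_le_nhds
  obtain ⟨x, hx, hx0⟩ := (hnear.and self_mem_nhdsWithin).exists
  exact hx.not_gt (mem_iInter₂.1 hu x hx0)

lemma eventually_measure_extend_lt_lt {x : ℝ} (hx : 0 < x) (hη : 0 < η) :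
    ∀ᶠ y in 𝓝[>] 0, μ {u | extend u x < y} < η :=
  eventually_measure_lt_of_biInter_eq_empty
    (fun y => measurableSet_lt (continuous_extend_apply x).measurable measurable_const)
    (fun y y' hyy' u hu => hu.trans_le hyy')
    (eq_empty_iff_forall_notMem.2 fun u hu => by
      have : extend u x < extend u x := mem_iInter₂.1 hu _ (extend_pos u hx)
      exact lt_irrefl _ this) hη

lemma eventually_measure_one_sub_lt_extend_lt {x : ℝ} (hx : x < 1) (hη : 0 < η) :
    ∀ᶠ r in 𝓝[>] 0, μ {u | 1 - r < extend u x} < η :=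
  eventually_measure_lt_of_biInter_eq_empty (fun r => measurableSet_lt_extend (1 - r) x)
    (fun r r' hrr' u (hu : 1 - r < extend u x) => show 1 - r' < extend u x by linarith)
    (eq_empty_iff_forall_notMem.2 fun u hu => by
      have : 1 - (1 - extend u x) < extend u x :=
        mem_iInter₂.1 hu _ (sub_pos.2 (extend_lt_one u hx))
      linarith) hη

lemma exists_le_half_measure_wrongSide_lt (n : ℕ) {z : ℝ × ℝ} (hz : 0 < z.1 ∧ 0 < z.2)
    (hη : 0 < η) : ∃ z' : ℝ × ℝ, (0 < z'.1 ∧ 0 < z'.2) ∧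
      z'.1 ≤ z.1 / 2 ∧ z'.2 ≤ z.2 / 2 ∧ μ (wrongSide n z') < η := by
  rcases Nat.even_or_odd n with hn | hn
  · obtain ⟨y, hyμ, hy⟩ := ((eventually_measure_extend_lt_lt μ (half_pos hz.1) hη).and
      (Ioo_mem_nhdsGT (half_pos hz.2))).exists
    exact ⟨(z.1 / 2, y), ⟨half_pos hz.1, hy.1⟩, le_rfl, hy.2.le, by rwa [wrongSide, if_pos hn]⟩
  · obtain ⟨x, hxμ, hx⟩ := ((eventually_measure_lt_extend_lt μ (half_pos hz.2) hη).and
      (Ioo_mem_nhdsGT (half_pos hz.1))).exists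
    exact ⟨(x, z.2 / 2), ⟨hx.1, half_pos hz.2⟩, hx.2.le, le_rfl,
      by rwa [wrongSide, if_neg (Nat.not_even_iff_odd.2 hn)]⟩

lemma exists_alternating_points : ∃ x y : ℕ → ℝ,
    StrictAnti x ∧ Tendsto x atTop (𝓝[>] 0) ∧ StrictAnti y ∧ Tendsto y atTop (𝓝[>] 0) ∧
      x 0 ≤ 2⁻¹ ∧ y 0 ≤ 2⁻¹ ∧ ∀ n, μ (wrongSide n (x n, y n)) < 2⁻¹ ^ (n + 2) := by
  obtain ⟨z, hz₀, hz⟩ := exists_seq_of_forall_exists (p := fun z : ℝ × ℝ => 0 < z.1 ∧ 0 < z.2)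
    (r := fun n z z' => z'.1 ≤ z.1 / 2 ∧ z'.2 ≤ z.2 / 2 ∧ μ (wrongSide n z') < 2⁻¹ ^ (n + 2))
    (a := (1, 1)) ⟨one_pos, one_pos⟩ fun n _ hz =>
      exists_le_half_measure_wrongSide_lt μ n hz
        (ENNReal.pow_pos (ENNReal.inv_pos.2 ENNReal.ofNat_ne_top) _)
  obtain ⟨hx, hx₀⟩ := strictAnti_tendsto_of_le_half (x := fun n => (z (n + 1)).1)
    (fun n => (hz (n + 1)).1.1) fun n => (hz (n + 1)).2.1
  obtain ⟨hy, hy₀⟩ := strictAnti_tendsto_of_le_half (x := fun n => (z (n + 1)).2)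
    (fun n => (hz (n + 1)).1.2) fun n => (hz (n + 1)).2.2.1
  obtain ⟨-, hx₁, hy₁, -⟩ := hz 0
  rw [hz₀] at hx₁ hy₁
  exact ⟨_, _, hx, hx₀, hy, hy₀, by simpa using hx₁, by simpa using hy₁, fun n => (hz n).2.2.2⟩

end

variable (μ : Measure HomeoPlusI) [IsProbabilityMeasure μ]

theorem exists_measure_crossingSet_infinite_pos :
    ∃ ψ : HomeoPlusI, 0 < μ {u | (crossingSet u ψ).Infinite} := by
  obtain ⟨x, y, hx, hx₀, hy, hy₀, hx₁, hy₁, hμ⟩ := exists_alternating_points μ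
  let X := Scale.ofEnds _ _ hx strictAnti_two_inv_pow_add_two hx₀ tendsto_two_inv_pow_add_two
    (by norm_num; linarith)
  let Y := Scale.ofEnds _ _ hy strictAnti_two_inv_pow_add_two hy₀ tendsto_two_inv_pow_add_two
    (by norm_num; linarith)
  refine ⟨Scale.interp X Y, (measure_iInter_compl_pos ((ENNReal.tsum_le_tsum fun n =>
    (hμ n).le).trans_lt tsum_two_inv_pow_add_two_lt_one)).trans_le
    (measure_mono fun u hu => ?_)⟩
  have hu' (n : ℕ) : u ∉ wrongSide n (x n, y n) := mem_iInter.1 hu n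
  refine crossingSet_infinite_of_alternating hx (fun n => X.mem_Ioo (Int.negSucc n))
    (fun n => ?_) fun n => ?_
  · have := hu' (2 * n)
    rw [wrongSide, if_pos (even_two_mul n)] at this
    exact (Scale.extend_interp X Y (Int.negSucc (2 * n))).trans_le (not_lt.1 this)
  · have := hu' (2 * n + 1)
    rw [wrongSide, if_neg (Nat.not_even_iff_odd.2 (odd_two_mul_add_one n))] at this
    exact (not_lt.1 this).trans_eq (Scale.extend_interp X Y (Int.negSucc (2 * n + 1))).symm

theorem exists_measure_crossingSet_eq_empty_pos :
    ∃ φ : HomeoPlusI, 0 < μ {u | crossingSet u φ = ∅} := by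
  have hη (n : ℕ) : (0 : ℝ≥0∞) < 2⁻¹ ^ (n + 3) :=
    ENNReal.pow_pos (ENNReal.inv_pos.2 ENNReal.ofNat_ne_top) _
  obtain ⟨a, ha, ha₀, haμ⟩ := exists_seq_strictAnti_of_eventually fun n =>
    (eventually_measure_lt_extend_lt μ (y := 2⁻¹ ^ (n + 2)) (by positivity) (hη n)).and
      (Ioo_mem_nhdsGT (by norm_num : (0 : ℝ) < 2⁻¹))
  obtain ⟨b, hb, hb₀, hbμ⟩ := exists_seq_strictAnti_of_eventually fun n =>
    (eventually_measure_one_sub_lt_extend_lt μ (x := 1 - 2⁻¹ ^ (n + 2))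
      (sub_lt_self _ (by positivity)) (hη n)).and
      (Ioo_mem_nhdsGT (by norm_num : (0 : ℝ) < 2⁻¹))
  let P := Scale.ofEnds _ _ ha strictAnti_two_inv_pow_add_two ha₀ tendsto_two_inv_pow_add_two
    (by norm_num; linarith [(haμ 0).2.2])
  let V := Scale.ofEnds _ _ strictAnti_two_inv_pow_add_two hb tendsto_two_inv_pow_add_two hb₀
    (by norm_num; linarith [(hbμ 0).2.2])
  have hsum : ∑' n, μ ({u | 2⁻¹ ^ (n + 2) < extend u (a n)} ∪
      {u | 1 - b n < extend u (1 - 2⁻¹ ^ (n + 2))}) < 1 := by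
    refine (ENNReal.tsum_le_tsum fun n => (measure_union_le _ _).trans
      (add_le_add (haμ n).1.le (hbμ n).1.le)).trans_lt ?_
    simpa only [pow_succ _ (_ + 2), ← mul_add, ENNReal.inv_two_add_inv_two, mul_one]
      using tsum_two_inv_pow_add_two_lt_one
  refine ⟨Scale.interp P V.shift, (measure_iInter_compl_pos hsum).trans_le
    (measure_mono fun u hu => crossingSet_eq_empty_of_scale P fun k => ?_)⟩
  have hu' (n : ℕ) := mem_iInter.1 hu n
  simp only [mem_compl_iff, mem_union, mem_ofPred_eq, not_or, not_lt] at hu'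
  have hPV : ∀ j, extend u (P j) ≤ V j
    | .ofNat n => (hu' n).2
    | .negSucc n => (hu' n).1
  exact (hPV (k + 1)).trans_eq (Scale.extend_interp P V.shift k).symm

end HomeoPlusI

/-- For every `q ∈ Homeo⁺([0,1])`, the set of `f` crossing the curve of `q` infinitely many
times in `(0,1)` is neither Haar null nor co-Haar null. -/
theorem stmt_7 (q : HomeoPlusI) :
    ¬ IsHaarNull {f : HomeoPlusI |
        {x : I | (x : ℝ) ∈ Set.Ioo (0 : ℝ) 1 ∧ (f : I ≃ₜ I) x = (q : I ≃ₜ I) x}.Infinite} ∧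
      ¬ IsHaarNull ({f : HomeoPlusI |
        {x : I | (x : ℝ) ∈ Set.Ioo (0 : ℝ) 1 ∧ (f : I ≃ₜ I) x = (q : I ≃ₜ I) x}.Infinite}ᶜ) := by
  refine ⟨not_isHaarNull_of_forall_exists_measure_pos fun μ _ => ?_,
    not_isHaarNull_of_forall_exists_measure_pos fun μ _ => ?_⟩
  · obtain ⟨ψ, hψ⟩ := HomeoPlusI.exists_measure_crossingSet_infinite_pos μ
    refine ⟨q * ψ⁻¹, hψ.trans_le (measure_mono fun u hu => ?_)⟩
    change (crossingSet (q * ψ⁻¹ * u) q).Infinite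
    rwa [crossingSet_mul_inv_mul]
  · obtain ⟨φ, hφ⟩ := HomeoPlusI.exists_measure_crossingSet_eq_empty_pos μ
    refine ⟨q * φ⁻¹, hφ.trans_le (measure_mono fun u (hu : crossingSet u φ = ∅) => ?_)⟩
    change ¬ (crossingSet (q * φ⁻¹ * u) q).Infinite
    rw [crossingSet_mul_inv_mul, hu]
    exact finite_empty.not_infinite
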